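/- Let f : Finset α → ℝ be a nonnegative, monotone (A ⊆ B implies f(A) ≤ f(B)), submodular set function (for all A ⊆ B and x ∉ B, f(insert x A) - f(A) ≥ f(insert x B) - f(B)) on a finite ground set with f(∅) = 0. Let k ≥ 1 and let S_0 = ∅, S_{i+1} = insert x_i S_i where at each step x_i is chosen to maximize the marginal gain f(insert x S_i) - f(S_i) over elements x of the ground set. Then for every subset O of the ground set with |O| ≤ k, f(S_k) ≥ (1 - 1/e) · f(O). -/

import Mathlib

/-!
Let `gᵢ = f O - f Sᵢ` be the gap to a competitor `O` with `|O| ≤ k`. By submodularity the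
marginal gains at `Sᵢ` of the elements of `O` sum to at least `f (O ∪ Sᵢ) - f Sᵢ ≥ gᵢ`, so the
greedy element gains at least `gᵢ / k`. Thus `gᵢ₊₁ ≤ (1 - 1/k) gᵢ`, and
`g_k ≤ (1 - 1/k)ᵏ f O ≤ f O / e`.
-/

section

open Finset

variable {α : Type*} [DecidableEq α] {f : Finset α → ℝ}

theorem union_sub_le_sum_marginal
    (hsubmod : ∀ A B : Finset α, A ⊆ B → ∀ x ∉ B, f (insert x B) - f B ≤ f (insert x A) - f A)
    (A B : Finset α) : f (A ∪ B) - f B ≤ ∑ y ∈ A, (f (insert y B) - f B) := by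
  induction A using Finset.induction_on with
  | empty => simp
  | @insert a A ha ih =>
    rw [sum_insert ha, insert_union]
    by_cases haB : a ∈ B
    · rw [insert_eq_of_mem (mem_union_right A haB), insert_eq_of_mem haB]
      linarith
    · have := hsubmod B (A ∪ B) subset_union_right a (by simp [ha, haB])
      linarith

theorem sub_le_card_mul_of_marginal_le (hmono : Monotone f)
    (hsubmod : ∀ A B : Finset α, A ⊆ B → ∀ x ∉ B, f (insert x B) - f B ≤ f (insert x A) - f A)
    {O S : Finset α} {δ : ℝ} (hgain : ∀ y ∈ O, f (insert y S) - f S ≤ δ) :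
    f O - f S ≤ #O * δ :=
  calc f O - f S ≤ f (O ∪ S) - f S := by gcongr; exact hmono subset_union_left
    _ ≤ ∑ y ∈ O, (f (insert y S) - f S) := union_sub_le_sum_marginal hsubmod O S
    _ ≤ #O * δ := by simpa using sum_le_card_nsmul O _ δ hgain

theorem sub_insert_le_one_sub_inv_mul_sub (hmono : Monotone f)
    (hsubmod : ∀ A B : Finset α, A ⊆ B → ∀ x ∉ B, f (insert x B) - f B ≤ f (insert x A) - f A)
    {O S : Finset α} {x : α} {k : ℕ} (hk : 0 < k) (hO : #O ≤ k)
    (hx : ∀ y ∈ O, f (insert y S) - f S ≤ f (insert x S) - f S) :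
    f O - f (insert x S) ≤ (1 - 1 / k) * (f O - f S) := by
  have hk' : (0 : ℝ) < k := by exact_mod_cast hk
  have hgain : 0 ≤ f (insert x S) - f S := sub_nonneg.2 (hmono (subset_insert x S))
  have hgap : f O - f S ≤ k * (f (insert x S) - f S) :=
    (sub_le_card_mul_of_marginal_le hmono hsubmod hx).trans (by gcongr)
  calc f O - f (insert x S) = (f O - f S) - (f (insert x S) - f S) := by ring
    _ ≤ (f O - f S) - (f O - f S) / k := by gcongr; rwa [div_le_iff₀ hk', mul_comm]
    _ = (1 - 1 / k) * (f O - f S) := by ring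

end

theorem greedy_submodular_one_sub_inv_e_general {α : Type*} [DecidableEq α]
    (V : Finset α) (f : Finset α → ℝ)
    (hmono : ∀ A B : Finset α, A ⊆ B → f A ≤ f B)
    (hsubmod : ∀ A B : Finset α, A ⊆ B → ∀ x ∉ B,
      f (insert x B) - f B ≤ f (insert x A) - f A)
    (hempty : f ∅ = 0)
    (k : ℕ) (hk : 1 ≤ k)
    (S : ℕ → Finset α) (x : ℕ → α)
    (hS0 : S 0 = ∅)
    (hSsucc : ∀ i, S (i + 1) = insert (x i) (S i))
    (hx_greedy : ∀ i, ∀ y ∈ V,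
      f (insert y (S i)) - f (S i) ≤ f (insert (x i) (S i)) - f (S i)) :
    ∀ O : Finset α, O ⊆ V → O.card ≤ k → f (S k) ≥ (1 - 1 / Real.exp 1) * f O := by
  intro O hOV hOk
  have hmono' : Monotone f := fun A B h => hmono A B h
  have hratio : 0 ≤ 1 - 1 / (k : ℝ) :=
    sub_nonneg.2 (div_le_one_of_le₀ (by exact_mod_cast hk) (Nat.cast_nonneg k))
  have hgap : f O - f (S k) ≤ (1 - 1 / (k : ℝ)) ^ k * (f O - f (S 0)) :=
    le_geom (u := fun i => f O - f (S i)) hratio k fun i _ => by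
      simpa only [hSsucc] using sub_insert_le_one_sub_inv_mul_sub hmono' hsubmod hk hOk
        fun y hy => hx_greedy i y (hOV hy)
  have hdecay : (1 - 1 / (k : ℝ)) ^ k ≤ 1 / Real.exp 1 := by
    simpa [Real.exp_neg] using Real.one_sub_div_pow_le_exp_neg (n := k) (t := 1) (by exact_mod_cast hk)
  have hfO : 0 ≤ f O := hempty ▸ hmono ∅ O (Finset.empty_subset O)
  rw [hS0, hempty, sub_zero] at hgap
  nlinarith [mul_le_mul_of_nonneg_right hdecay hfO]

/-- Nemhauser–Wolsey–Fisher: the greedy algorithm for maximizing a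
nonnegative, monotone, submodular set function under a cardinality
constraint `k` achieves a `(1 - 1/e)` approximation. -/
theorem greedy_submodular_one_sub_inv_e {α : Type*} [DecidableEq α]
    (V : Finset α) (f : Finset α → ℝ)
    (hnonneg : ∀ A : Finset α, 0 ≤ f A)
    (hmono : ∀ A B : Finset α, A ⊆ B → f A ≤ f B)
    (hsubmod : ∀ A B : Finset α, A ⊆ B → ∀ x ∉ B,
      f (insert x B) - f B ≤ f (insert x A) - f A)
    (hempty : f ∅ = 0)
    (k : ℕ) (hk : 1 ≤ k)
    (S : ℕ → Finset α) (x : ℕ → α)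
    (hS0 : S 0 = ∅)
    (hSsucc : ∀ i, S (i + 1) = insert (x i) (S i))
    (hx_mem : ∀ i, x i ∈ V)
    (hx_greedy : ∀ i, ∀ y ∈ V,
      f (insert y (S i)) - f (S i) ≤ f (insert (x i) (S i)) - f (S i)) :
    ∀ O : Finset α, O ⊆ V → O.card ≤ k → f (S k) ≥ (1 - 1 / Real.exp 1) * f O :=
  greedy_submodular_one_sub_inv_e_general V f hmono hsubmod hempty k hk S x hS0 hSsucc hx_greedy
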